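/- The Euler characteristic of the clique complex of G_n = (C_n)ᶜ satisfies χ(G_n) = 1 - 2·cos(π·n/3) for every n ≥ 3, and the Euler characteristic of the clique complex of G_n^+ = (P_n)ᶜ satisfies χ(G_n^+) = 1 - cos(π·n/3) + sin(π·n/3)/√3 for every n ≥ 1 (both identities being equalities of real numbers, with the integer χ cast to ℝ). In particular both sequences of Euler characteristics are 6-periodic in n. -/

import Mathlib

/-- The cycle graph `C_n` on `Fin n`: `i ~ j` iff `i - j ≡ ±1 (mod n)`. -/
def cycleGraph (n : ℕ) : SimpleGraph (Fin n) where
  Adj i j := i ≠ j ∧ ((i - j : Fin n).val = 1 ∨ (j - i : Fin n).val = 1)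
  symm := by
    constructor
    intro i j h
    exact ⟨h.1.symm, h.2.symm⟩
  loopless := by
    constructor
    intro i h
    exact h.1 rfl

instance (n : ℕ) : DecidableRel (cycleGraph n).Adj :=
  fun a b => inferInstanceAs (Decidable (a ≠ b ∧ ((a - b : Fin n).val = 1 ∨ (b - a : Fin n).val = 1)))

/-- The path graph `P_n` on `Fin n`: `i ~ j` iff `|i - j| = 1`. -/
def pathGraph' (n : ℕ) : SimpleGraph (Fin n) where
  Adj i j := (i : ℕ) + 1 = (j : ℕ) ∨ (j : ℕ) + 1 = (i : ℕ)
  symm := by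
    constructor
    intro i j h
    exact h.symm
  loopless := by
    constructor
    intro i h
    rcases h with h | h <;> omega

instance (n : ℕ) : DecidableRel (pathGraph' n).Adj :=
  fun a b => inferInstanceAs (Decidable ((a : ℕ) + 1 = (b : ℕ) ∨ (b : ℕ) + 1 = (a : ℕ)))

/-- The finset of all nonempty cliques of a finite simple graph. -/
noncomputable def cliquesOf {V : Type*} [Finite V] (G : SimpleGraph V) : Finset (Finset V) := by
  classical
  letI : Fintype V := Fintype.ofFinite V
  exact Finset.univ.filter (fun s : Finset V => s.Nonempty ∧ G.IsClique (s : Set V))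

/-- The number of cliques with exactly `j` elements (the empty clique counting for `j = 0`). -/
noncomputable def cliqueCount {V : Type*} [Finite V] (G : SimpleGraph V) (j : ℕ) : ℕ := by
  classical
  letI : Fintype V := Fintype.ofFinite V
  exact (Finset.univ.filter (fun s : Finset V => G.IsClique (s : Set V) ∧ s.card = j)).card

/-- The Euler characteristic of the clique (Whitney) complex of `G`. -/
noncomputable def eulerChar {V : Type*} [Finite V] (G : SimpleGraph V) : ℤ :=
  ∑ c ∈ cliquesOf G, (-1 : ℤ) ^ (c.card + 1)

/-- The simplex generating function `f_G(t) = 1 + ∑_c t^{|c|}`. -/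
noncomputable def fgen {V : Type*} [Finite V] (G : SimpleGraph V) (t : ℝ) : ℝ :=
  1 + ∑ c ∈ cliquesOf G, t ^ c.card


open Finset

def Ind (t : Finset ℕ) : Prop := ∀ i ∈ t, i + 1 ∉ t

instance (t : Finset ℕ) : Decidable (Ind t) := inferInstanceAs (Decidable (∀ i ∈ t, i + 1 ∉ t))

def qq (n : ℕ) : ℤ :=
  ∑ t ∈ (Finset.range n).powerset, if Ind t then (-1 : ℤ) ^ t.card else 0

lemma q0 : qq 0 = 1 := by simp [qq, Ind]
lemma q1 : qq 1 = 0 := by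
  rw [qq, show Finset.range 1 = {0} from rfl, show ({0} : Finset ℕ).powerset = {∅, {0}} from rfl]
  rw [Finset.sum_insert (by simp [Ne.symm (Finset.singleton_ne_empty 0)]), Finset.sum_singleton]
  norm_num [Ind]

lemma ind_insert {m : ℕ} {t : Finset ℕ} (ht : t ⊆ Finset.range (m + 1)) :
    Ind (insert (m + 1) t) ↔ Ind t ∧ m ∉ t := by
  constructor
  · intro h
    refine ⟨fun i hi hi1 => h i (mem_insert_of_mem hi) (mem_insert_of_mem hi1), fun hm => ?_⟩
    exact h m (mem_insert_of_mem hm) (mem_insert_self _ _)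
  · rintro ⟨h, hm⟩ i hi hi1
    rcases mem_insert.mp hi with rfl | hi
    · rcases mem_insert.mp hi1 with h2 | h2
      · omega
      · have := mem_range.mp (ht h2); omega
    · rcases mem_insert.mp hi1 with h2 | h2
      · have : i = m := by omega
        exact hm (this ▸ hi)
      · exact h i hi h2

lemma aux1 (m : ℕ) :
    ∑ t ∈ (Finset.range (m + 1)).powerset,
      (if Ind t ∧ m ∉ t then (-1 : ℤ) ^ t.card else 0) = qq m := by
  rw [Finset.range_add_one, Finset.sum_powerset_insert (by simp)]
  have h2 : ∑ t ∈ (Finset.range m).powerset,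
      (if Ind (insert m t) ∧ m ∉ insert m t then (-1 : ℤ) ^ (insert m t).card else 0) = 0 := by
    apply Finset.sum_eq_zero
    intro t _
    simp [mem_insert_self]
  rw [h2, add_zero, qq]
  apply Finset.sum_congr rfl
  intro t ht
  have hm : m ∉ t := fun h => by simpa using mem_range.mp (mem_powerset.mp ht h)
  simp [hm]

lemma q_rec (n : ℕ) : qq (n + 2) = qq (n + 1) - qq n := by
  have : qq (n + 2) = qq (n + 1) + ∑ t ∈ (Finset.range (n + 1)).powerset,
      (if Ind (insert (n + 1) t) then (-1 : ℤ) ^ (insert (n + 1) t).card else 0) := by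
    rw [qq, show n + 2 = (n + 1) + 1 from rfl, Finset.range_add_one,
      Finset.sum_powerset_insert (by simp)]
    rfl
  rw [this]
  have h2 : ∑ t ∈ (Finset.range (n + 1)).powerset,
      (if Ind (insert (n + 1) t) then (-1 : ℤ) ^ (insert (n + 1) t).card else 0)
      = -∑ t ∈ (Finset.range (n + 1)).powerset,
        (if Ind t ∧ n ∉ t then (-1 : ℤ) ^ t.card else 0) := by
    rw [← Finset.sum_neg_distrib]
    apply Finset.sum_congr rfl
    intro t ht
    have ht' := mem_powerset.mp ht
    have hnot : n + 1 ∉ t := fun h => by simpa using mem_range.mp (ht' h)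
    by_cases h : Ind t ∧ n ∉ t
    · rw [if_pos h, if_pos ((ind_insert ht').mpr h), Finset.card_insert_of_notMem hnot, pow_succ]
      ring
    · rw [if_neg h, if_neg (fun hc => h ((ind_insert ht').mp hc)), neg_zero]
  rw [h2, aux1]
  ring

lemma q_p3 (n : ℕ) : qq (n + 3) = -qq n := by
  have h1 : qq (n + 3) = qq (n + 2) - qq (n + 1) := q_rec (n + 1)
  have h2 : qq (n + 2) = qq (n + 1) - qq n := q_rec n
  omega

lemma q_p6 (n : ℕ) : qq (n + 6) = qq n := by
  have h1 : qq (n + 6) = -qq (n + 3) := q_p3 (n + 3)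
  have h2 : qq (n + 3) = -qq n := q_p3 n
  omega

lemma q2 : qq 2 = -1 := by have h : qq 2 = qq 1 - qq 0 := q_rec 0; rw [q0, q1] at h; omega
lemma q3 : qq 3 = -1 := by have h : qq 3 = qq 2 - qq 1 := q_rec 1; rw [q2, q1] at h; omega
lemma q4 : qq 4 = 0 := by have h : qq 4 = qq 3 - qq 2 := q_rec 2; rw [q2, q3] at h; omega
lemma q5 : qq 5 = 1 := by have h : qq 5 = qq 4 - qq 3 := q_rec 3; rw [q4, q3] at h; omega
lemma q6 : qq 6 = 1 := by have h : qq 6 = qq 5 - qq 4 := q_rec 4; rw [q4, q5] at h; omega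
lemma q7 : qq 7 = 0 := by have h : qq 7 = qq 6 - qq 5 := q_rec 5; rw [q6, q5] at h; omega

lemma ind_image_succ (t : Finset ℕ) : Ind (t.image (· + 1)) ↔ Ind t := by
  constructor
  · intro h i hi hi1
    exact h (i + 1) (mem_image_of_mem _ hi) (mem_image_of_mem _ hi1)
  · intro h i hi hi1
    simp only [Finset.mem_image] at hi hi1
    obtain ⟨a, ha, rfl⟩ := hi
    obtain ⟨b, hb, hb1⟩ := hi1
    have : b = a + 1 := by omega
    exact h a ha (this ▸ hb)

lemma succ_inj' : Function.Injective (· + 1 : ℕ → ℕ) := add_left_injective 1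

lemma image_succ_range (m : ℕ) :
    Finset.Ico 1 (m + 1) = (Finset.range m).image (· + 1) := by
  ext x
  simp only [Finset.mem_Ico, Finset.mem_image, Finset.mem_range]
  constructor
  · intro h; exact ⟨x - 1, by omega, by omega⟩
  · rintro ⟨a, ha, rfl⟩; show 1 ≤ a + 1 ∧ a + 1 < m + 1; omega

lemma powerset_image_succ (s : Finset ℕ) :
    (s.image (· + 1)).powerset = s.powerset.image (fun t => t.image (· + 1)) := by
  ext u
  simp only [Finset.mem_powerset, Finset.mem_image]
  constructor
  · intro hu
    obtain ⟨s', hs', rfl⟩ := Finset.subset_image_iff.mp hu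
    exact ⟨s', hs', rfl⟩
  · rintro ⟨t, ht, rfl⟩
    exact Finset.image_subset_image ht

lemma q_shift (m : ℕ) :
    ∑ t ∈ (Finset.Ico 1 (m + 1)).powerset,
      (if Ind t then (-1 : ℤ) ^ t.card else 0) = qq m := by
  rw [image_succ_range, powerset_image_succ,
    Finset.sum_image (fun x _ y _ h => Finset.image_injective succ_inj' h)]
  apply Finset.sum_congr rfl
  intro t _
  rw [Finset.card_image_of_injective _ succ_inj']
  by_cases h : Ind t
  · rw [if_pos ((ind_image_succ t).mpr h), if_pos h]
  · rw [if_neg (fun hc => h ((ind_image_succ t).mp hc)), if_neg h]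

lemma aux2 (m : ℕ) :
    ∑ t ∈ (Finset.range (m + 2)).powerset,
      (if Ind t ∧ m + 1 ∉ t ∧ 0 ∉ t then (-1 : ℤ) ^ t.card else 0) = qq m := by
  have hsub : (Finset.Ico 1 (m + 1)).powerset ⊆ (Finset.range (m + 2)).powerset :=
    Finset.powerset_mono.mpr (fun x hx =>
      Finset.mem_range.mpr (by have := Finset.mem_Ico.mp hx; omega))
  have hzero : ∀ t ∈ (Finset.range (m + 2)).powerset, t ∉ (Finset.Ico 1 (m + 1)).powerset →
      (if Ind t ∧ m + 1 ∉ t ∧ 0 ∉ t then (-1 : ℤ) ^ t.card else 0) = 0 := by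
    intro t ht hns
    rw [Finset.mem_powerset] at ht hns
    rw [if_neg]
    rintro ⟨-, h1, h0⟩
    obtain ⟨x, hx, hxn⟩ := Finset.not_subset.mp hns
    have hxr := Finset.mem_range.mp (ht hx)
    rw [Finset.mem_Ico] at hxn
    have hx0 : x = 0 ∨ x = m + 1 := by omega
    rcases hx0 with rfl | rfl
    · exact h0 hx
    · exact h1 hx
  rw [← Finset.sum_subset hsub hzero, ← q_shift m]
  apply Finset.sum_congr rfl
  intro t ht
  have ht' := Finset.mem_powerset.mp ht
  have h1 : m + 1 ∉ t := fun h => by have := Finset.mem_Ico.mp (ht' h); omega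
  have h0 : 0 ∉ t := fun h => by have := Finset.mem_Ico.mp (ht' h); omega
  by_cases h : Ind t
  · rw [if_pos ⟨h, h1, h0⟩, if_pos h]
  · rw [if_neg (fun hc => h hc.1), if_neg h]

def rr (n : ℕ) : ℤ := ∑ t ∈ (Finset.range n).powerset,
  if Ind t ∧ ¬(0 ∈ t ∧ n - 1 ∈ t) then (-1 : ℤ) ^ t.card else 0

lemma r_eq (m : ℕ) : rr (m + 3) = qq (m + 2) - qq m := by
  rw [rr, show m + 3 - 1 = m + 2 from rfl, show m + 3 = (m + 2) + 1 from rfl,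
    Finset.range_add_one, Finset.sum_powerset_insert (by simp)]
  have hfirst : ∑ t ∈ (Finset.range (m + 2)).powerset,
      (if Ind t ∧ ¬(0 ∈ t ∧ m + 2 ∈ t) then (-1 : ℤ) ^ t.card else 0) = qq (m + 2) := by
    apply Finset.sum_congr rfl
    intro t ht
    have hm : m + 2 ∉ t := fun h => by
      have := Finset.mem_range.mp (Finset.mem_powerset.mp ht h); omega
    simp [hm]
  have hsecond : ∑ t ∈ (Finset.range (m + 2)).powerset,
      (if Ind (insert (m + 2) t) ∧ ¬(0 ∈ insert (m + 2) t ∧ m + 2 ∈ insert (m + 2) t)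
        then (-1 : ℤ) ^ (insert (m + 2) t).card else 0) = -qq m := by
    rw [← aux2 m, ← Finset.sum_neg_distrib]
    apply Finset.sum_congr rfl
    intro t ht
    have ht' := Finset.mem_powerset.mp ht
    have hnot : m + 2 ∉ t := fun h => by have := Finset.mem_range.mp (ht' h); omega
    have hcond : (Ind (insert (m + 2) t) ∧ ¬(0 ∈ insert (m + 2) t ∧ m + 2 ∈ insert (m + 2) t))
        ↔ (Ind t ∧ m + 1 ∉ t ∧ 0 ∉ t) := by
      rw [ind_insert ht']
      constructor
      · rintro ⟨⟨hInd, hm1⟩, hno⟩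
        exact ⟨hInd, hm1, fun h0 =>
          hno ⟨Finset.mem_insert_of_mem h0, Finset.mem_insert_self _ _⟩⟩
      · rintro ⟨hInd, hm1, h0⟩
        refine ⟨⟨hInd, hm1⟩, fun ⟨ha, _⟩ => ?_⟩
        rcases Finset.mem_insert.mp ha with h | h
        · omega
        · exact h0 h
    by_cases h : Ind t ∧ m + 1 ∉ t ∧ 0 ∉ t
    · rw [if_pos (hcond.mpr h), if_pos h, Finset.card_insert_of_notMem hnot, pow_succ]
      ring
    · rw [if_neg (fun hc => h (hcond.mp hc)), if_neg h, neg_zero]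
  rw [hfirst, hsecond]
  ring


lemma mem_cliquesOf {V : Type*} [Finite V] (G : SimpleGraph V) (s : Finset V) :
    s ∈ cliquesOf G ↔ s.Nonempty ∧ G.IsClique (s : Set V) := by
  classical
  unfold cliquesOf
  simp

lemma image_val_filter {n : ℕ} (t : Finset ℕ) (ht : t ⊆ Finset.range n) :
    Finset.image Fin.val (Finset.univ.filter (fun i : Fin n => (i : ℕ) ∈ t)) = t := by
  ext x
  simp only [Finset.mem_image, Finset.mem_filter, Finset.mem_univ, true_and]
  constructor
  · rintro ⟨i, hi, rfl⟩; exact hi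
  · intro hx
    exact ⟨⟨x, Finset.mem_range.mp (ht hx)⟩, hx, rfl⟩

lemma mem_insert_cliques {V : Type*} [Finite V] [DecidableEq V] (G : SimpleGraph V) (s : Finset V) :
    s ∈ insert ∅ (cliquesOf G) ↔ G.IsClique (s : Set V) := by
  rw [Finset.mem_insert, mem_cliquesOf]
  constructor
  · rintro (rfl | ⟨-, h⟩)
    · simp [SimpleGraph.isClique_empty]
    · exact h
  · intro h
    rcases Finset.eq_empty_or_nonempty s with rfl | hs
    · exact Or.inl rfl
    · exact Or.inr ⟨hs, h⟩

lemma euler_eq {n : ℕ} (G : SimpleGraph (Fin n)) (P : Finset ℕ → Prop) [DecidablePred P]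
    (hP : ∀ s : Finset (Fin n), G.IsClique (s : Set (Fin n)) ↔ P (s.image Fin.val)) :
    eulerChar G = 1 - ∑ t ∈ (Finset.range n).powerset,
      (if P t then (-1 : ℤ) ^ t.card else 0) := by
  classical
  have he : (∅ : Finset (Fin n)) ∉ cliquesOf G := by
    rw [mem_cliquesOf]
    rintro ⟨⟨x, hx⟩, -⟩
    exact absurd hx (Finset.notMem_empty x)
  have hsum : ∑ t ∈ (Finset.range n).powerset, (if P t then (-1 : ℤ) ^ t.card else 0)
      = ∑ s ∈ insert ∅ (cliquesOf G), (-1 : ℤ) ^ s.card := by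
    rw [← Finset.sum_filter]
    symm
    refine Finset.sum_nbij' (i := fun s => s.image Fin.val)
      (j := fun t => Finset.univ.filter (fun i : Fin n => (i : ℕ) ∈ t))
      (fun a ha => ?_) (fun t ht => ?_) (fun a ha => ?_) (fun t ht => ?_) (fun a ha => ?_)
    · rw [Finset.mem_filter, Finset.mem_powerset]
      refine ⟨fun x hx => ?_, (hP a).mp ((mem_insert_cliques G a).mp ha)⟩
      obtain ⟨i, -, rfl⟩ := Finset.mem_image.mp hx
      exact Finset.mem_range.mpr i.isLt
    · rw [Finset.mem_filter, Finset.mem_powerset] at ht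
      rw [mem_insert_cliques, hP, image_val_filter _ ht.1]
      exact ht.2
    · ext i
      simp only [Finset.mem_filter, Finset.mem_univ, true_and, Finset.mem_image]
      constructor
      · rintro ⟨b, hb, hval⟩
        rwa [← Fin.val_injective hval]
      · intro hi; exact ⟨i, hi, rfl⟩
    · rw [Finset.mem_filter, Finset.mem_powerset] at ht
      exact image_val_filter _ ht.1
    · rw [Finset.card_image_of_injective _ Fin.val_injective]
  rw [hsum, Finset.sum_insert he, eulerChar]
  have hneg : ∑ c ∈ cliquesOf G, (-1 : ℤ) ^ (c.card + 1)
      = -∑ c ∈ cliquesOf G, (-1 : ℤ) ^ c.card := by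
    rw [← Finset.sum_neg_distrib]
    exact Finset.sum_congr rfl fun c _ => by rw [pow_succ]; ring
  rw [hneg]
  simp

lemma sub_val_eq_one {n : ℕ} (hn : 2 ≤ n) (i j : Fin n) :
    ((i - j : Fin n)).val = 1 ↔ (i.val = j.val + 1 ∨ (i.val = 0 ∧ j.val + 1 = n)) := by
  have hi := i.isLt
  have hj := j.isLt
  rw [Fin.sub_def]
  show ((n - j.val) + i.val) % n = 1 ↔ _
  rcases le_or_gt j.val i.val with h | h
  · rw [show (n - j.val) + i.val = (i.val - j.val) + n by omega, Nat.add_mod_right,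
      Nat.mod_eq_of_lt (by omega)]
    omega
  · rw [Nat.mod_eq_of_lt (by omega)]
    omega

lemma clique_path_iff {n : ℕ} (s : Finset (Fin n)) :
    ((pathGraph' n)ᶜ).IsClique (s : Set (Fin n)) ↔ Ind (s.image Fin.val) := by
  constructor
  · intro h x hx hx1
    obtain ⟨i, hi, rfl⟩ := Finset.mem_image.mp hx
    obtain ⟨j, hj, hj1⟩ := Finset.mem_image.mp hx1
    have hij : i ≠ j := fun he => by rw [he] at hj1; omega
    have := (h (Finset.mem_coe.mpr hi) (Finset.mem_coe.mpr hj) hij).2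
    exact this (Or.inl hj1.symm)
  · intro hInd i hi j hj hij
    rw [SimpleGraph.compl_adj]
    refine ⟨hij, ?_⟩
    rintro (h | h)
    · exact hInd i.val (Finset.mem_image_of_mem _ hi) (h ▸ Finset.mem_image_of_mem _ hj)
    · exact hInd j.val (Finset.mem_image_of_mem _ hj) (h ▸ Finset.mem_image_of_mem _ hi)

lemma clique_cycle_iff {n : ℕ} (hn : 3 ≤ n) (s : Finset (Fin n)) :
    ((cycleGraph n)ᶜ).IsClique (s : Set (Fin n)) ↔
      (Ind (s.image Fin.val) ∧ ¬(0 ∈ s.image Fin.val ∧ n - 1 ∈ s.image Fin.val)) := by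
  have hn2 : 2 ≤ n := by omega
  constructor
  · intro h
    constructor
    · intro x hx hx1
      obtain ⟨i, hi, rfl⟩ := Finset.mem_image.mp hx
      obtain ⟨j, hj, hj1⟩ := Finset.mem_image.mp hx1
      have hij : i ≠ j := fun he => by rw [he] at hj1; omega
      have h2 := (h (Finset.mem_coe.mpr hi) (Finset.mem_coe.mpr hj) hij).2
      exact h2 ⟨hij, Or.inr ((sub_val_eq_one hn2 j i).mpr (Or.inl hj1))⟩
    · rintro ⟨h0, h1⟩
      obtain ⟨i, hi, hi0⟩ := Finset.mem_image.mp h0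
      obtain ⟨j, hj, hj1⟩ := Finset.mem_image.mp h1
      have hij : i ≠ j := fun he => by rw [he, hj1] at hi0; omega
      have h2 := (h (Finset.mem_coe.mpr hi) (Finset.mem_coe.mpr hj) hij).2
      exact h2 ⟨hij, Or.inl ((sub_val_eq_one hn2 i j).mpr (Or.inr ⟨hi0, by omega⟩))⟩
  · rintro ⟨hInd, hpair⟩ i hi j hj hij
    rw [SimpleGraph.compl_adj]
    refine ⟨hij, ?_⟩
    rintro ⟨-, (h1 | h1)⟩
    · rcases (sub_val_eq_one hn2 i j).mp h1 with h2 | ⟨h2, h3⟩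
      · exact hInd j.val (Finset.mem_image_of_mem _ hj)
          (h2 ▸ Finset.mem_image_of_mem _ hi)
      · refine hpair ⟨h2 ▸ Finset.mem_image_of_mem Fin.val hi, ?_⟩
        have : j.val = n - 1 := by omega
        exact this ▸ Finset.mem_image_of_mem Fin.val hj
    · rcases (sub_val_eq_one hn2 j i).mp h1 with h2 | ⟨h2, h3⟩
      · exact hInd i.val (Finset.mem_image_of_mem _ hi)
          (h2 ▸ Finset.mem_image_of_mem _ hj)
      · refine hpair ⟨h2 ▸ Finset.mem_image_of_mem Fin.val hj, ?_⟩
        have : i.val = n - 1 := by omega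
        exact this ▸ Finset.mem_image_of_mem Fin.val hi

lemma euler_path (n : ℕ) : eulerChar ((pathGraph' n)ᶜ) = 1 - qq n := by
  rw [euler_eq ((pathGraph' n)ᶜ) Ind (fun s => clique_path_iff s)]
  rfl

lemma euler_cycle (m : ℕ) : eulerChar ((cycleGraph (m + 3))ᶜ) = 1 - qq (m + 2) + qq m := by
  rw [euler_eq ((cycleGraph (m + 3))ᶜ)
      (fun t => Ind t ∧ ¬(0 ∈ t ∧ (m + 3) - 1 ∈ t))
      (fun s => clique_cycle_iff (by omega) s)]
  have : ∑ t ∈ (Finset.range (m + 3)).powerset,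
      (if Ind t ∧ ¬(0 ∈ t ∧ (m + 3) - 1 ∈ t) then (-1 : ℤ) ^ t.card else 0) = rr (m + 3) := rfl
  rw [this, r_eq]
  ring

lemma path_per (n : ℕ) : eulerChar ((pathGraph' (n + 6))ᶜ) = eulerChar ((pathGraph' n)ᶜ) := by
  rw [euler_path, euler_path, q_p6]

lemma cyc_per (n : ℕ) (hn : 3 ≤ n) :
    eulerChar ((cycleGraph (n + 6))ᶜ) = eulerChar ((cycleGraph n)ᶜ) := by
  obtain ⟨m, rfl⟩ : ∃ m, n = m + 3 := ⟨n - 3, by omega⟩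
  have h1 : eulerChar ((cycleGraph (m + 3 + 6))ᶜ) = 1 - qq (m + 6 + 2) + qq (m + 6) :=
    euler_cycle (m + 6)
  have h2 : eulerChar ((cycleGraph (m + 3))ᶜ) = 1 - qq (m + 2) + qq m := euler_cycle m
  have e1 : qq (m + 6 + 2) = qq (m + 2) := by
    have := q_p6 (m + 2); rwa [show m + 2 + 6 = m + 6 + 2 by omega] at this
  have e2 : qq (m + 6) = qq m := q_p6 m
  rw [h1, h2, e1, e2]

lemma sqrt3_div : (Real.sqrt 3 / 2) / Real.sqrt 3 = 1 / 2 := by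
  rw [div_div, mul_comm, ← div_div, div_self (by positivity : Real.sqrt 3 ≠ 0)]

lemma key_cycle (m : ℕ) : ((1 - qq (m + 2) + qq m : ℤ) : ℝ)
    = 1 - 2 * Real.cos (Real.pi * ((m + 3 : ℕ) : ℝ) / 3) := by
  induction m using Nat.strong_induction_on with
  | _ m ih =>
    rcases (by omega : m = 0 ∨ m = 1 ∨ m = 2 ∨ m = 3 ∨ m = 4 ∨ m = 5 ∨ 6 ≤ m) with
      rfl | rfl | rfl | rfl | rfl | rfl | h6
    · rw [show ((0 + 3 : ℕ) : ℝ) = 3 by norm_num,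
        show Real.pi * 3 / 3 = Real.pi by ring, Real.cos_pi]
      norm_num [q2, q0]
    · rw [show ((1 + 3 : ℕ) : ℝ) = 4 by norm_num,
        show Real.pi * 4 / 3 = Real.pi / 3 + Real.pi by ring, Real.cos_add_pi,
        Real.cos_pi_div_three]
      norm_num [q3, q1]
    · rw [show ((2 + 3 : ℕ) : ℝ) = 5 by norm_num,
        show Real.pi * 5 / 3 = 2 * Real.pi - Real.pi / 3 by ring, Real.cos_two_pi_sub,
        Real.cos_pi_div_three]
      norm_num [q4, q2]
    · rw [show ((3 + 3 : ℕ) : ℝ) = 6 by norm_num,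
        show Real.pi * 6 / 3 = 2 * Real.pi by ring, Real.cos_two_pi]
      norm_num [q5, q3]
    · rw [show ((4 + 3 : ℕ) : ℝ) = 7 by norm_num,
        show Real.pi * 7 / 3 = Real.pi / 3 + 2 * Real.pi by ring, Real.cos_add_two_pi,
        Real.cos_pi_div_three]
      norm_num [q6, q4]
    · rw [show ((5 + 3 : ℕ) : ℝ) = 8 by norm_num,
        show Real.pi * 8 / 3 = (Real.pi - Real.pi / 3) + 2 * Real.pi by ring,
        Real.cos_add_two_pi, Real.cos_pi_sub, Real.cos_pi_div_three]
      norm_num [q7, q5]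
    · obtain ⟨k, rfl⟩ : ∃ k, m = k + 6 := ⟨m - 6, by omega⟩
      have e1 : qq (k + 6 + 2) = qq (k + 2) := by
        have := q_p6 (k + 2); rwa [show k + 2 + 6 = k + 6 + 2 by omega] at this
      have e2 : qq (k + 6) = qq k := q_p6 k
      rw [e1, e2, show ((k + 6 + 3 : ℕ) : ℝ) = ((k + 3 : ℕ) : ℝ) + 6 by push_cast; ring,
        show Real.pi * (((k + 3 : ℕ) : ℝ) + 6) / 3
          = Real.pi * ((k + 3 : ℕ) : ℝ) / 3 + 2 * Real.pi by ring,
        Real.cos_add_two_pi]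
      exact ih k (by omega)

lemma key_path (m : ℕ) : ((1 - qq (m + 1) : ℤ) : ℝ)
    = 1 - Real.cos (Real.pi * ((m + 1 : ℕ) : ℝ) / 3)
      + Real.sin (Real.pi * ((m + 1 : ℕ) : ℝ) / 3) / Real.sqrt 3 := by
  induction m using Nat.strong_induction_on with
  | _ m ih =>
    rcases (by omega : m = 0 ∨ m = 1 ∨ m = 2 ∨ m = 3 ∨ m = 4 ∨ m = 5 ∨ 6 ≤ m) with
      rfl | rfl | rfl | rfl | rfl | rfl | h6
    · rw [show ((0 + 1 : ℕ) : ℝ) = 1 by norm_num,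
        show Real.pi * 1 / 3 = Real.pi / 3 by ring, Real.cos_pi_div_three,
        Real.sin_pi_div_three, sqrt3_div]
      norm_num [q1]
    · rw [show ((1 + 1 : ℕ) : ℝ) = 2 by norm_num,
        show Real.pi * 2 / 3 = Real.pi - Real.pi / 3 by ring, Real.cos_pi_sub,
        Real.sin_pi_sub, Real.cos_pi_div_three, Real.sin_pi_div_three, sqrt3_div]
      norm_num [q2]
    · rw [show ((2 + 1 : ℕ) : ℝ) = 3 by norm_num,
        show Real.pi * 3 / 3 = Real.pi by ring, Real.cos_pi, Real.sin_pi]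
      norm_num [q3]
    · rw [show ((3 + 1 : ℕ) : ℝ) = 4 by norm_num,
        show Real.pi * 4 / 3 = Real.pi / 3 + Real.pi by ring, Real.cos_add_pi,
        Real.sin_add_pi, Real.cos_pi_div_three, Real.sin_pi_div_three, neg_div, sqrt3_div]
      norm_num [q4]
    · rw [show ((4 + 1 : ℕ) : ℝ) = 5 by norm_num,
        show Real.pi * 5 / 3 = 2 * Real.pi - Real.pi / 3 by ring, Real.cos_two_pi_sub,
        Real.sin_two_pi_sub, Real.cos_pi_div_three, Real.sin_pi_div_three, neg_div, sqrt3_div]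
      norm_num [q5]
    · rw [show ((5 + 1 : ℕ) : ℝ) = 6 by norm_num,
        show Real.pi * 6 / 3 = 2 * Real.pi by ring, Real.cos_two_pi, Real.sin_two_pi]
      norm_num [q6]
    · obtain ⟨k, rfl⟩ : ∃ k, m = k + 6 := ⟨m - 6, by omega⟩
      have e1 : qq (k + 6 + 1) = qq (k + 1) := by
        have := q_p6 (k + 1); rwa [show k + 1 + 6 = k + 6 + 1 by omega] at this
      rw [e1, show ((k + 6 + 1 : ℕ) : ℝ) = ((k + 1 : ℕ) : ℝ) + 6 by push_cast; ring,
        show Real.pi * (((k + 1 : ℕ) : ℝ) + 6) / 3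
          = Real.pi * ((k + 1 : ℕ) : ℝ) / 3 + 2 * Real.pi by ring,
        Real.cos_add_two_pi, Real.sin_add_two_pi]
      exact ih k (by omega)

/-- 6-periodicity of Euler characteristic: `χ(G_n) = 1 - 2 cos(π n/3)` for `n ≥ 3` and
`χ(G_n^+) = 1 - cos(π n/3) + sin(π n/3)/√3` for `n ≥ 1`; in particular both sequences
of Euler characteristics are 6-periodic in `n`. -/
theorem eulerChar_formulas :
    (∀ n : ℕ, 3 ≤ n →
      (eulerChar ((cycleGraph n)ᶜ) : ℝ) = 1 - 2 * Real.cos (Real.pi * n / 3)) ∧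
    (∀ n : ℕ, 1 ≤ n →
      (eulerChar ((pathGraph' n)ᶜ) : ℝ) =
        1 - Real.cos (Real.pi * n / 3) + Real.sin (Real.pi * n / 3) / Real.sqrt 3) ∧
    (∀ n : ℕ, 3 ≤ n → eulerChar ((cycleGraph (n + 6))ᶜ) = eulerChar ((cycleGraph n)ᶜ)) ∧
    (∀ n : ℕ, 1 ≤ n → eulerChar ((pathGraph' (n + 6))ᶜ) = eulerChar ((pathGraph' n)ᶜ)) := by
  refine ⟨?_, ?_, ?_, ?_⟩
  · intro n hn
    obtain ⟨m, rfl⟩ : ∃ m, n = m + 3 := ⟨n - 3, by omega⟩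
    rw [euler_cycle m]
    exact key_cycle m
  · intro n hn
    obtain ⟨m, rfl⟩ : ∃ m, n = m + 1 := ⟨n - 1, by omega⟩
    rw [euler_path (m + 1)]
    exact key_path m
  · intro n hn
    exact cyc_per n hn
  · intro n hn
    exact path_per n
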